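/- Let (X_n, Y_n) be the arithmetic coding interval endpoints under i.i.d. Bernoulli(p) bits. For every m ≥ 1, E[X_n^m] → 1/(m+1) as n → ∞. Consequently X_n converges in distribution to the uniform distribution on [0,1]. -/

import Mathlib

/-!
After `n` bits, `(X n, Y n)` is the coding interval of the bit string read so far. These `2ⁿ`
intervals tile `[0,1]`, each has length equal to the probability of its bit string, and all
lengths are at most `max q (1 - q) ^ n`. Hence `E[h (X n)]` is a left-endpoint Riemann sum of `h`
over a tiling of `[0,1]` with vanishing mesh, so it tends to `∫₀¹ h` for every continuous `h`;
monomials give the moments.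
-/

open MeasureTheory ProbabilityTheory Filter Set Topology

section RiemannSum

variable {ι : Type*} {h : ℝ → ℝ} {ε : ℝ}

lemma abs_sum_mul_sub_sum_integral_le (s : Finset ι) {a b : ι → ℝ}
    (hab : ∀ i ∈ s, a i ≤ b i) (hh : Continuous h)
    (hε : ∀ i ∈ s, ∀ x ∈ Icc (a i) (b i), |h (a i) - h x| ≤ ε) :
    |∑ i ∈ s, (b i - a i) * h (a i) - ∑ i ∈ s, ∫ x in a i..b i, h x|
      ≤ ε * ∑ i ∈ s, (b i - a i) := by
  rw [← Finset.sum_sub_distrib, Finset.mul_sum]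
  refine (Finset.abs_sum_le_sum_abs _ _).trans (Finset.sum_le_sum fun i hi => ?_)
  have hconst : (b i - a i) * h (a i) = ∫ _ in a i..b i, h (a i) := by simp
  rw [hconst, ← intervalIntegral.integral_sub intervalIntegrable_const (hh.intervalIntegrable _ _)]
  have hbound := intervalIntegral.norm_integral_le_of_norm_le_const
    (f := fun x => h (a i) - h x) (C := ε) fun x hx => by
      rw [uIoc_of_le (hab i hi)] at hx
      exact hε i hi x (Ioc_subset_Icc_self hx)
  rwa [abs_of_nonneg (sub_nonneg.2 (hab i hi))] at hbound

theorem tendsto_sum_mul_of_tiling {κ : ℕ → Type*} [∀ n, Fintype (κ n)] {a b : ∀ n, κ n → ℝ}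
    {δ : ℕ → ℝ} (hδ : Tendsto δ atTop (𝓝 0))
    (hab : ∀ n i, 0 ≤ a n i ∧ a n i ≤ b n i ∧ b n i ≤ 1)
    (hmesh : ∀ n i, b n i - a n i ≤ δ n)
    (htile : ∀ n (g : ℝ → ℝ), Continuous g → ∑ i, ∫ x in a n i..b n i, g x = ∫ x in 0..1, g x)
    (hh : Continuous h) :
    Tendsto (fun n => ∑ i, (b n i - a n i) * h (a n i)) atTop (𝓝 (∫ x in 0..1, h x)) := by
  rw [Metric.tendsto_atTop]
  intro ε hε
  obtain ⟨η, hη, hηh⟩ := Metric.uniformContinuousOn_iff.1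
    (isCompact_Icc.uniformContinuousOn_of_continuous hh.continuousOn) (ε / 2) (half_pos hε)
  obtain ⟨N, hN⟩ := eventually_atTop.1 (hδ.eventually (gt_mem_nhds hη))
  refine ⟨N, fun n hn => ?_⟩
  have hlen : ∑ i, (b n i - a n i) = 1 := by
    simpa using htile n (fun _ => 1) continuous_const
  have hclose : ∀ i ∈ Finset.univ, ∀ x ∈ Icc (a n i) (b n i), |h (a n i) - h x| ≤ ε / 2 := by
    intro i _ x hx
    obtain ⟨ha0, hab', hb1⟩ := hab n i
    refine (hηh _ ⟨ha0, hab'.trans hb1⟩ x ⟨ha0.trans hx.1, hx.2.trans hb1⟩ ?_).le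
    rw [Real.dist_eq, abs_sub_comm, abs_of_nonneg (sub_nonneg.2 hx.1)]
    linarith [hx.2, hmesh n i, hN n hn]
  calc dist (∑ i, (b n i - a n i) * h (a n i)) (∫ x in 0..1, h x)
      ≤ ε / 2 * ∑ i, (b n i - a n i) := by
        rw [Real.dist_eq, ← htile n h hh]
        exact abs_sum_mul_sub_sum_integral_le _ (fun i _ => (hab n i).2.1) hh hclose
    _ < ε := by rw [hlen]; linarith

end RiemannSum

lemma sum_pi_bool_snoc {M : Type*} [AddCommMonoid M] {n : ℕ} (f : (Fin (n + 1) → Bool) → M) :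
    ∑ w, f w = ∑ v : Fin n → Bool, (f (Fin.snoc v false) + f (Fin.snoc v true)) := by
  rw [← (Fin.snocEquiv fun _ => Bool).sum_comp, Fintype.sum_prod_type]
  simp [Fin.snocEquiv, Finset.sum_add_distrib, add_comm]

namespace ArithmeticCoding

variable (q : ℝ)

def step (I : ℝ × ℝ) (b : Bool) : ℝ × ℝ :=
  if b then (I.1 + q * (I.2 - I.1), I.2) else (I.1, I.1 + q * (I.2 - I.1))

def interval : (n : ℕ) → (Fin n → Bool) → ℝ × ℝ
  | 0, _ => (0, 1)
  | n + 1, v => step q (interval n (Fin.init v)) (v (Fin.last n))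

def bitWeight (b : Bool) : ℝ := if b then 1 - q else q

variable {q}

lemma interval_snoc {n : ℕ} (v : Fin n → Bool) (b : Bool) :
    interval q (n + 1) (Fin.snoc v b) = step q (interval q n v) b := by
  simp [interval, Fin.init_snoc, Fin.snoc_last]

lemma eq_interval {s : ℕ → ℝ × ℝ} {c : ℕ → Bool} (h0 : s 0 = (0, 1))
    (hs : ∀ n, s (n + 1) = step q (s n) (c n)) (n : ℕ) :
    s n = interval q n (fun i => c i) := by
  induction n with
  | zero => exact h0
  | succ n ih => rw [hs, ih]; rfl

lemma step_length (I : ℝ × ℝ) (b : Bool) :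
    (step q I b).2 - (step q I b).1 = bitWeight q b * (I.2 - I.1) := by
  cases b <;> simp only [step, bitWeight, Bool.false_eq_true, ↓reduceIte] <;> ring

lemma interval_length {n : ℕ} (v : Fin n → Bool) :
    (interval q n v).2 - (interval q n v).1 = ∏ i, bitWeight q (v i) := by
  induction n with
  | zero => simp [interval]
  | succ n ih => rw [interval, step_length, ih, Fin.prod_univ_castSucc, mul_comm]; rfl

lemma step_bounds {I : ℝ × ℝ} (hI : I.1 ≤ I.2) (hq0 : 0 ≤ q) (hq1 : q ≤ 1) (b : Bool) :
    I.1 ≤ (step q I b).1 ∧ (step q I b).1 ≤ (step q I b).2 ∧ (step q I b).2 ≤ I.2 := by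
  have h1 : 0 ≤ q * (I.2 - I.1) := mul_nonneg hq0 (sub_nonneg.2 hI)
  have h2 : q * (I.2 - I.1) ≤ I.2 - I.1 := mul_le_of_le_one_left (sub_nonneg.2 hI) hq1
  cases b <;> simp only [step, Bool.false_eq_true, ↓reduceIte] <;> refine ⟨?_, ?_, ?_⟩ <;> linarith

lemma interval_bounds (hq0 : 0 ≤ q) (hq1 : q ≤ 1) {n : ℕ} (v : Fin n → Bool) :
    0 ≤ (interval q n v).1 ∧ (interval q n v).1 ≤ (interval q n v).2 ∧
      (interval q n v).2 ≤ 1 := by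
  induction n with
  | zero => simp [interval]
  | succ n ih =>
    obtain ⟨h0, h12, h1⟩ := ih (Fin.init v)
    obtain ⟨h0', h12', h1'⟩ := step_bounds h12 hq0 hq1 (v (Fin.last n))
    exact ⟨h0.trans h0', h12', h1'.trans h1⟩

lemma interval_length_le (hq0 : 0 ≤ q) (hq1 : q ≤ 1) {n : ℕ} (v : Fin n → Bool) :
    (interval q n v).2 - (interval q n v).1 ≤ max q (1 - q) ^ n := by
  rw [interval_length]
  calc ∏ i, bitWeight q (v i) ≤ ∏ _i : Fin n, max q (1 - q) := by
        refine Finset.prod_le_prod (fun i _ => ?_) fun i _ => ?_ <;>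
          cases v i <;> simp [bitWeight, hq0, hq1]
    _ = max q (1 - q) ^ n := by simp

lemma sum_integral_interval {g : ℝ → ℝ} (hg : Continuous g) (n : ℕ) :
    ∑ v, ∫ x in (interval q n v).1..(interval q n v).2, g x = ∫ x in 0..1, g x := by
  induction n with
  | zero => simp [interval]
  | succ n ih =>
    rw [sum_pi_bool_snoc, ← ih]
    refine Finset.sum_congr rfl fun v _ => ?_
    simp only [interval_snoc, step, Bool.false_eq_true, ↓reduceIte]
    exact intervalIntegral.integral_add_adjacent_intervals (hg.intervalIntegrable _ _)
      (hg.intervalIntegrable _ _)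

variable {Ω : Type*} [MeasurableSpace Ω] {μ : Measure Ω} [IsProbabilityMeasure μ]

lemma map_apply_singleton_eq_bitWeight {C : Ω → Bool} (hC : Measurable C)
    (htrue : μ {ω | C ω = true} = ENNReal.ofReal (1 - q)) (hq1 : q ≤ 1)
    (b : Bool) : μ.map C {b} = ENNReal.ofReal (bitWeight q b) := by
  rw [Measure.map_apply hC (measurableSet_singleton b)]
  have hmeas : MeasurableSet {ω | C ω = true} := hC (measurableSet_singleton true)
  cases b
  · have hfalse : C ⁻¹' {false} = {ω | C ω = true}ᶜ := by ext; simp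
    rw [hfalse, prob_compl_eq_one_sub hmeas, htrue, ← ENNReal.ofReal_one,
      ← ENNReal.ofReal_sub _ (by linarith)]
    simp [bitWeight]
  · exact htrue

lemma integral_comp_bits {B : ℕ → Ω → Bool} (hB : ∀ n, Measurable (B n)) (hindep : iIndepFun B μ)
    (htrue : ∀ n, μ {ω | B n ω = true} = ENNReal.ofReal (1 - q)) (hq0 : 0 ≤ q) (hq1 : q ≤ 1)
    {n : ℕ} (f : (Fin n → Bool) → ℝ) :
    ∫ ω, f (fun i => B i ω) ∂μ = ∑ v, (∏ i, bitWeight q (v i)) * f v := by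
  have hbits : Measurable fun ω (i : Fin n) => B i ω := measurable_pi_lambda _ fun i => hB i
  have hlaw : μ.map (fun ω (i : Fin n) => B i ω) = Measure.pi fun i : Fin n => μ.map (B i) :=
    (hindep.precomp (g := fun i : Fin n => (i : ℕ)) Fin.val_injective).map_fun_eq_pi_map
      fun i => (hB i).aemeasurable
  rw [← integral_map hbits.aemeasurable (measurable_of_countable f).aestronglyMeasurable, hlaw,
    integral_fintype .of_finite]
  refine Finset.sum_congr rfl fun v _ => ?_
  have hw : ∀ i, 0 ≤ bitWeight q (v i) := fun i => by
    cases v i <;> simp [bitWeight, hq0, hq1]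
  simp only [measureReal_def, Measure.pi_singleton,
    map_apply_singleton_eq_bitWeight (hB _) (htrue _) hq1, smul_eq_mul,
    ENNReal.toReal_prod, ENNReal.toReal_ofReal (hw _)]

lemma tendsto_sum_length_mul_interval (hq0 : 0 < q) (hq1 : q < 1) {h : ℝ → ℝ}
    (hh : Continuous h) :
    Tendsto (fun n => ∑ v : Fin n → Bool,
        ((interval q n v).2 - (interval q n v).1) * h (interval q n v).1)
      atTop (𝓝 (∫ x in 0..1, h x)) :=
  tendsto_sum_mul_of_tiling
    (tendsto_pow_atTop_nhds_zero_of_lt_one (le_max_of_le_left hq0.le)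
      (max_lt hq1 (by linarith)))
    (fun _ v => interval_bounds hq0.le hq1.le v) (fun _ v => interval_length_le hq0.le hq1.le v)
    (fun n _ hg => sum_integral_interval hg n) hh

end ArithmeticCoding

open ArithmeticCoding in
/-- For every `m ≥ 1`, `E[X_nᵐ] → 1/(m+1)`; consequently `X_n` converges in
distribution to the uniform distribution on `[0,1]` (tested against bounded
continuous functions). -/
theorem codeword_uniform_limit
    (p : ℝ) (hp : p ∈ Set.Ioo (0:ℝ) 1) (q : ℝ) (hq : q = 1 - p)
    {Ω : Type*} [MeasurableSpace Ω] (μ : Measure Ω) [IsProbabilityMeasure μ]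
    (B : ℕ → Ω → Bool) (hBmeas : ∀ n, Measurable (B n))
    (hBindep : iIndepFun B μ)
    (hBdist : ∀ n, μ {ω | B n ω = true} = ENNReal.ofReal p)
    (X Y : ℕ → Ω → ℝ)
    (hX0 : ∀ ω, X 0 ω = 0) (hY0 : ∀ ω, Y 0 ω = 1)
    (hstep : ∀ n ω, (X (n + 1) ω, Y (n + 1) ω) =
      if B n ω then (X n ω + q * (Y n ω - X n ω), Y n ω)
      else (X n ω, X n ω + q * (Y n ω - X n ω))) :
    (∀ m : ℕ, 1 ≤ m →
      Tendsto (fun n => ∫ ω, (X n ω) ^ m ∂μ) atTop (nhds (1 / (m + 1 : ℝ)))) ∧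
    (∀ f : BoundedContinuousFunction ℝ ℝ,
      Tendsto (fun n => ∫ ω, f (X n ω) ∂μ) atTop
        (nhds (∫ x in Set.Icc (0:ℝ) 1, f x))) := by
  obtain rfl : p = 1 - q := by linarith
  have hq0 : 0 < q := by linarith [hp.2]
  have hq1 : q < 1 := by linarith [hp.1]
  have hX : ∀ n ω, X n ω = (interval q n fun i => B i ω).1 := fun n ω => by
    rw [← eq_interval (s := fun n => (X n ω, Y n ω)) (by simp [hX0, hY0])
      (fun n => hstep n ω) n]
  have hlim : ∀ h : ℝ → ℝ, Continuous h →
      Tendsto (fun n => ∫ ω, h (X n ω) ∂μ) atTop (𝓝 (∫ x in 0..1, h x)) := by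
    intro h hh
    simp_rw [hX, integral_comp_bits hBmeas hBindep hBdist hq0.le hq1.le
      (fun v => h (interval q _ v).1), ← interval_length]
    exact tendsto_sum_length_mul_interval hq0 hq1 hh
  refine ⟨fun m _ => ?_, fun f => ?_⟩
  · simpa [integral_pow] using hlim _ (continuous_pow m)
  · rw [integral_Icc_eq_integral_Ioc, ← intervalIntegral.integral_of_le zero_le_one]
    exact hlim f f.continuous
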